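/- Fix b ∈ F with b ≠ 0 and define f : F → F by f(a) = a b⁴ + a⁴ b. Then f is an additive homomorphism and its kernel is exactly the two-element set {0, b}. -/

import Mathlib

/-!
In characteristic 2 the map `a ↦ a⁴` is additive, hence so is `f`. For `a ≠ 0` we have
`f a = a b (a³ + b³)`, so `a` lies in the kernel iff `a³ = b³`; since `3` is prime to
`|F^×| = 7`, cubing is injective on `F`, which leaves `a = b`.
-/

noncomputable abbrev F : Type := GaloisField 2 3

theorem CharTwo.add_pow_four {R : Type*} [CommSemiring R] [CharP R 2] (x y : R) :
    (x + y) ^ 4 = x ^ 4 + y ^ 4 := by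
  simp only [show 4 = 2 * 2 from rfl, pow_mul, CharTwo.add_sq]

theorem pow_left_injective_of_coprime_card_sub_one {K : Type*} [GroupWithZero K] [Finite K]
    {n : ℕ} (hn : n ≠ 0) (hcop : (Nat.card K - 1).Coprime n) :
    Function.Injective (· ^ n : K → K) := by
  have hunits : Function.Injective (· ^ n : Kˣ → Kˣ) :=
    (Nat.Coprime.pow_left_bijective (by rwa [Nat.card_units])).injective
  intro x y (hxy : x ^ n = y ^ n)
  rcases eq_or_ne x 0 with rfl | hx
  · rw [zero_pow hn, eq_comm, pow_eq_zero_iff hn] at hxy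
    exact hxy.symm
  rcases eq_or_ne y 0 with rfl | hy
  · rwa [zero_pow hn, pow_eq_zero_iff hn] at hxy
  exact congrArg Units.val <| @hunits (.mk0 x hx) (.mk0 y hy) (Units.ext hxy)

theorem mul_pow_four_add_pow_four_mul_eq_zero_iff {K : Type*} [Field K] [CharP K 2] {a b : K}
    (hb : b ≠ 0) : a * b ^ 4 + a ^ 4 * b = 0 ↔ a = 0 ∨ a ^ 3 = b ^ 3 := by
  rw [show a * b ^ 4 + a ^ 4 * b = a * b * (a ^ 3 + b ^ 3) by ring, mul_eq_zero, mul_eq_zero,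
    CharTwo.add_eq_zero]
  simp [hb]

theorem F.pow_three_injective : Function.Injective (· ^ 3 : F → F) :=
  pow_left_injective_of_coprime_card_sub_one three_ne_zero
    (by rw [GaloisField.card 2 3 three_ne_zero]; norm_num)

/-- For a fixed `b ≠ 0` in `F`, the map `f : a ↦ a b⁴ + a⁴ b` is an additive
homomorphism with kernel exactly `{0, b}`. -/
theorem f_additive_with_kernel (b : F) (hb : b ≠ 0) :
    (∀ a a' : F,
        (a + a') * b ^ 4 + (a + a') ^ 4 * b =
          (a * b ^ 4 + a ^ 4 * b) + (a' * b ^ 4 + a' ^ 4 * b)) ∧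
      {a : F | a * b ^ 4 + a ^ 4 * b = 0} = {0, b} := by
  refine ⟨fun a a' => by rw [CharTwo.add_pow_four]; ring, ?_⟩
  ext a
  simp [mul_pow_four_add_pow_four_mul_eq_zero_iff hb, F.pow_three_injective.eq_iff]
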